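/- Assume the following (Conjecture 3.1): for all real numbers y_1, …, y_ℓ, z such that z is not a rational linear combination of 1, y_1, …, y_ℓ, and for all ε, δ > 0 and every n_0 > 0, there exist positive integers n_0 < n_1 < n_2 < … < n_M and real numbers w_1, …, w_ℓ such that (i) max_{1≤i≤ℓ} ‖n_m·y_i − w_i‖ ≤ ε/2 for every m = 1, …, M, and (ii) setting K = ∏_{m=1}^M (n_m + 1) and k_m = K/(n_m + 1), the Lebesgue measure of (⋃_{m=1}^M ((ℤ + z)/k_m + (−ε/(2K), ε/(2K)))) ∩ [0,1) is at least 1 − δ. Then, for any sequence (y_i)_{i≥1} of real numbers and any sequence (z_i)_{i≥1} of real numbers no element of which is a rational linear combination of 1 and finitely many of the y_i, there exists an approximating function ψ : ℕ → [0,∞) such that: for every i ≥ 1, the set of real x satisfying ‖n·x + y_i‖ < ψ(n) for infinitely many integers n ≥ 1 is Lebesgue-null; and for every i ≥ 1, the set of real x NOT satisfying ‖n·x + z_i‖ < ψ(n) for infinitely many integers n ≥ 1 is Lebesgue-null. -/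

import Mathlib

/-! At stage `t` the conjecture, applied to `y₁, …, y_{t+1}` and to `-z_i` for an index `i`
that recurs infinitely often, yields a covering system `n₁ < ⋯ < n_M` with moduli
`k_m = K / (n_m + 1)`, `K = ∏ (n_m + 1)`, all beyond the previous stages. Put
`ψ(k_m) = ε k_m / (2K)`. The covering condition says exactly that the `x ∈ [0, 1)` with
`‖k_m x + z_i‖ < ψ(k_m)` for some `m` have measure `≥ 1 - ε`, so almost every `x` is
`ψ`-approximable for `z_i`. On the other hand `‖n_m y_j - w_j‖ ≤ ε/2` turns `‖k_m x + y_j‖ < ψ(k_m)`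
into `‖K x + y_j + w_j‖ < ε`, a set of measure `O(ε)`; with `ε` summable over the stages,
Borel–Cantelli makes the `ψ`-approximable set of `y_j` null. Both sets are `1`-periodic, so it
suffices to look at `[0, 1)`. -/

open MeasureTheory Filter Set

/-- Distance from a real number to the nearest integer. -/
noncomputable def nint (t : ℝ) : ℝ := |t - (round t : ℝ)|

lemma nint_le (t : ℝ) (a : ℤ) : nint t ≤ |t - a| := round_le t a

lemma nint_nonneg (t : ℝ) : 0 ≤ nint t := abs_nonneg _

lemma nint_add_intCast (t : ℝ) (a : ℤ) : nint (t + a) = nint t := by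
  simp only [nint, round_add_intCast, Int.cast_add, add_sub_add_right_eq_sub]

lemma nint_sub_le (s t : ℝ) : nint (s - t) ≤ nint s + nint t :=
  calc nint (s - t) ≤ |(s - round s) - (t - round t)| := by
        simpa only [Int.cast_sub, sub_sub_sub_comm] using nint_le (s - t) (round s - round t)
    _ ≤ nint s + nint t := abs_sub _ _

lemma nint_natCast_mul_le (k : ℕ) (t : ℝ) : nint (k * t) ≤ k * nint t :=
  calc nint (k * t) ≤ |k * t - (k * round t : ℤ)| := nint_le _ _
    _ = k * nint t := by push_cast; rw [← mul_sub, abs_mul, Nat.abs_cast]; rfl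

@[fun_prop]
lemma measurable_nint : Measurable nint := by
  have : nint = fun t => |t - (⌊t + 1 / 2⌋ : ℝ)| := by ext t; rw [nint, round_eq]
  rw [this]; fun_prop

lemma exists_abs_sub_div_lt_iff {k : ℝ} (hk : 0 < k) (x z r : ℝ) :
    (∃ a : ℤ, |x - (a + z) / k| < r) ↔ nint (k * x - z) < k * r := by
  have hscale : ∀ a : ℤ, |x - (a + z) / k| * k = |k * x - z - a| := fun a => by
    rw [← abs_of_pos hk, ← abs_mul, abs_of_pos hk]; congr 1; field_simp; ring
  constructor
  · rintro ⟨a, ha⟩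
    calc nint (k * x - z) ≤ |k * x - z - a| := nint_le _ a
      _ < k * r := by rw [← hscale, mul_comm k]; exact mul_lt_mul_of_pos_right ha hk
  · intro h
    refine ⟨round (k * x - z), lt_of_mul_lt_mul_right ?_ hk.le⟩
    rw [hscale, mul_comm r]
    exact h

lemma setOf_nint_lt_inter_Ico_subset {K : ℕ} (hK : 0 < K) (c : ℝ) {r : ℝ} (hr : r ≤ 1) :
    {x | nint (K * x + c) < r} ∩ Ico 0 1 ⊆
      ⋃ a ∈ Finset.Ioo (⌊c⌋ - 2) (⌊c⌋ + K + 2), Metric.ball ((a - c) / K) (r / K) := by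
  have hK' : (0 : ℝ) < K := by exact_mod_cast hK
  rintro x ⟨hx, hx0, hx1⟩
  set a := round (K * x + c)
  have ha := abs_lt.1 (show |K * x + c - a| < r from hx)
  have hKx : K * x < K := by nlinarith
  have hKx0 : 0 ≤ K * x := by positivity
  have hfloor := Int.floor_le c
  have hfloor' := Int.lt_floor_add_one c
  refine mem_biUnion (x := a) ?_ ?_
  · rw [Finset.mem_coe, Finset.mem_Ioo]
    constructor <;> (rw [← Int.cast_lt (R := ℝ)]; push_cast; linarith)
  · have hscale : K * (x - (a - c) / K) = K * x + c - a := by field_simp; ring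
    rw [Metric.mem_ball, Real.dist_eq, lt_div_iff₀ hK', ← abs_of_pos hK', ← abs_mul,
      abs_of_pos hK', mul_comm, hscale]
    exact hx

theorem volume_nint_lt_inter_Ico_le {K : ℕ} (hK : 0 < K) (c r : ℝ) :
    volume ({x | nint (K * x + c) < r} ∩ Ico 0 1) ≤ ENNReal.ofReal (8 * r) := by
  rcases lt_or_ge 1 (8 * r) with hr | hr
  · calc volume ({x | nint (K * x + c) < r} ∩ Ico 0 1) ≤ volume (Ico (0 : ℝ) 1) :=
          measure_mono inter_subset_right
      _ ≤ ENNReal.ofReal (8 * r) := by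
          rw [Real.volume_Ico]; exact ENNReal.ofReal_le_ofReal (by linarith)
  have hK' : (0 : ℝ) < K := by exact_mod_cast hK
  have hK1 : (1 : ℝ) ≤ K := by exact_mod_cast hK
  calc volume ({x | nint (K * x + c) < r} ∩ Ico 0 1)
      ≤ ∑ a ∈ Finset.Ioo (⌊c⌋ - 2) (⌊c⌋ + K + 2), volume (Metric.ball ((a - c) / K) (r / K)) :=
        (measure_mono (setOf_nint_lt_inter_Ico_subset hK c (by linarith))).trans
          (measure_biUnion_finset_le _ _)
    _ = ENNReal.ofReal ((K + 3) • (2 * (r / K))) := by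
        have hcard : (Finset.Ioo (⌊c⌋ - 2) (⌊c⌋ + K + 2)).card = K + 3 := by
          rw [Int.card_Ioo]; omega
        simp only [Real.volume_ball, Finset.sum_const, hcard, ENNReal.ofReal_nsmul]
    _ ≤ ENNReal.ofReal (8 * r) := by
        rw [ENNReal.ofReal_le_ofReal_iff', nsmul_eq_mul, Nat.cast_add, Nat.cast_ofNat,
          ← mul_div_assoc, ← mul_div_assoc]
        rcases le_or_gt r 0 with h | h
        · right; exact div_nonpos_of_nonpos_of_nonneg (by nlinarith) (by linarith)
        · left; rw [div_le_iff₀ hK']; nlinarith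

theorem volume_eq_zero_of_add_intCast_mem_iff {S : Set ℝ}
    (hS : ∀ (x : ℝ) (j : ℤ), x + j ∈ S ↔ x ∈ S) (h : volume (S ∩ Ico 0 1) = 0) :
    volume S = 0 := by
  refine (isAddFundamentalDomain_Ioc one_pos 0).measure_zero_of_invariant S (fun g => ?_) ?_
  · obtain ⟨g, j, rfl⟩ := g
    ext x
    simpa [Set.mem_vadd_set_iff_neg_vadd_mem, AddSubgroup.vadd_def, neg_add_eq_sub,
      sub_eq_add_neg] using hS x (-j)
  · rw [zero_add, ← h]
    exact measure_congr ((ae_eq_refl S).inter Ico_ae_eq_Ioc.symm)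

lemma volume_Ico_diff_le {A : Set ℝ} (hA : MeasurableSet A) {δ : ℝ}
    (h : ENNReal.ofReal (1 - δ) ≤ volume (A ∩ Ico 0 1)) :
    volume (Ico 0 1 \ A) ≤ ENNReal.ofReal δ := by
  have hsplit := measure_inter_add_sdiff (μ := volume) (Ico (0 : ℝ) 1) hA
  rw [Real.volume_Ico, sub_zero, ENNReal.ofReal_one, inter_comm] at hsplit
  calc volume (Ico 0 1 \ A) = 1 - volume (A ∩ Ico 0 1) := by
        rw [← hsplit, ENNReal.add_sub_cancel_left
          (ne_top_of_le_ne_top ENNReal.one_ne_top (hsplit ▸ le_self_add))]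
    _ ≤ 1 - ENNReal.ofReal (1 - δ) := tsub_le_tsub_left h 1
    _ ≤ ENNReal.ofReal δ := by
        rw [tsub_le_iff_right, ← ENNReal.ofReal_one]
        exact (ENNReal.ofReal_le_ofReal (by linarith)).trans ENNReal.ofReal_add_le

open Function in
lemma exists_eqOn_of_pairwise_disjoint {ι α β : Type*} [Zero β] {G : ι → Set α}
    (hG : Pairwise (Disjoint on G)) (Φ : ι → α → β) :
    ∃ ψ : α → β, (∀ i, EqOn ψ (Φ i) (G i)) ∧ support ψ ⊆ ⋃ i, G i := by
  classical
  refine ⟨fun a => if h : ∃ i, a ∈ G i then Φ h.choose a else 0, fun i a ha => ?_,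
    fun a ha => mem_iUnion.2 (by_contra fun h => ha (dif_neg h))⟩
  have h : ∃ i, a ∈ G i := ⟨i, ha⟩
  have hi : h.choose = i := by_contra fun hne => disjoint_left.1 (hG hne) h.choose_spec ha
  simp only [dif_pos h, hi]

def hitSet (S : Set ℕ) (ψ : ℕ → ℝ) (c : ℝ) : Set ℝ := {x | ∃ n ∈ S, nint (n * x + c) < ψ n}

def approxSet (ψ : ℕ → ℝ) (c : ℝ) : Set ℝ :=
  {x | {n : ℕ | 1 ≤ n ∧ nint (n * x + c) < ψ n}.Infinite}

section Approximation

variable {ψ : ℕ → ℝ} {c : ℝ}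

lemma measurableSet_hitSet (S : Set ℕ) (ψ : ℕ → ℝ) (c : ℝ) : MeasurableSet (hitSet S ψ c) := by
  have : hitSet S ψ c = ⋃ n ∈ S, {x | nint (n * x + c) < ψ n} := by ext; simp [hitSet]
  rw [this]
  exact .biUnion S.to_countable fun n _ => measurableSet_lt (by fun_prop) measurable_const

lemma hitSet_mono {S T : Set ℕ} (h : S ⊆ T) (ψ : ℕ → ℝ) (c : ℝ) : hitSet S ψ c ⊆ hitSet T ψ c :=
  fun _ ⟨n, hn, hx⟩ => ⟨n, h hn, hx⟩

lemma hitSet_congr {S : Set ℕ} {φ : ℕ → ℝ} (h : EqOn ψ φ S) (c : ℝ) :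
    hitSet S ψ c = hitSet S φ c :=
  Set.ext fun _ => exists_congr fun _ => and_congr_right fun hn => by rw [h hn]

lemma approxSet_eq_iInter_hitSet : approxSet ψ c = ⋂ N : ℕ, hitSet (Ioi N) ψ c := by
  ext x
  simp only [approxSet, hitSet, mem_ofPred_eq, mem_iInter, Set.infinite_iff_exists_gt, mem_Ioi]
  exact forall_congr' fun N => ⟨fun ⟨n, ⟨_, hn⟩, hNn⟩ => ⟨n, hNn, hn⟩,
    fun ⟨n, hNn, hn⟩ => ⟨n, ⟨by omega, hn⟩, hNn⟩⟩

lemma add_intCast_mem_approxSet_iff (x : ℝ) (j : ℤ) :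
    x + j ∈ approxSet ψ c ↔ x ∈ approxSet ψ c := by
  have h : ∀ n : ℕ, nint (n * (x + j) + c) = nint (n * x + c) := fun n => by
    rw [← nint_add_intCast (n * x + c) (n * j)]; push_cast; ring_nf
  simp only [approxSet, mem_ofPred_eq, h]

theorem volume_compl_approxSet_eq_zero {G : ℕ → Finset ℕ} (hG : ∀ t, ∀ k ∈ G t, t < k)
    (h : ∀ (N : ℕ) (δ : ℝ), 0 < δ →
      ∃ t, N ≤ t ∧ ENNReal.ofReal (1 - δ) ≤ volume (hitSet (G t) ψ c ∩ Ico 0 1)) :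
    volume (approxSet ψ c)ᶜ = 0 := by
  refine volume_eq_zero_of_add_intCast_mem_iff
    (fun x j => (add_intCast_mem_approxSet_iff x j).not) ?_
  rw [approxSet_eq_iInter_hitSet, compl_iInter, iUnion_inter]
  refine measure_iUnion_null fun N => nonpos_iff_eq_zero.1 <| ENNReal.le_of_forall_pos_le_add
    fun δ hδ _ => ?_
  obtain ⟨t, hNt, ht⟩ := h N δ hδ
  have hsub : hitSet (G t) ψ c ⊆ hitSet (Ioi N) ψ c :=
    hitSet_mono (fun k hk => hNt.trans_lt (hG t k hk)) ψ c
  rw [zero_add, inter_comm, ← ENNReal.ofReal_coe_nnreal]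
  exact volume_Ico_diff_le (measurableSet_hitSet _ _ _)
    (ht.trans (measure_mono (inter_subset_inter_left _ hsub)))

/-- Borel–Cantelli, the support of `ψ` being split into the finite sets `G t`. -/
theorem volume_approxSet_eq_zero {G : ℕ → Finset ℕ}
    (hψ : Function.support ψ ⊆ ⋃ t, (G t : Set ℕ)) {f : ℕ → ℝ} (hf : Summable f) (T : ℕ)
    (hG : ∀ t, T ≤ t → volume (hitSet (G t) ψ c ∩ Ico 0 1) ≤ ENNReal.ofReal (f t)) :
    volume (approxSet ψ c) = 0 := by
  refine volume_eq_zero_of_add_intCast_mem_iff add_intCast_mem_approxSet_iff ?_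
  have hsum : ∑' t, volume (hitSet (G (t + T)) ψ c ∩ Ico 0 1) ≠ ⊤ :=
    ne_top_of_le_ne_top ((summable_nat_add_iff T).2 hf).tsum_ofReal_ne_top
      (ENNReal.tsum_le_tsum fun t => hG (t + T) le_add_self)
  refine measure_mono_null ?_ (measure_limsup_atTop_eq_zero hsum)
  rintro x ⟨hx, hx01⟩
  rw [mem_limsup_iff_frequently_mem, frequently_atTop]
  intro t₀
  by_contra! hfin
  refine hx (((Finset.range (t₀ + T)).biUnion G).finite_toSet.subset ?_)
  rintro n ⟨-, hn⟩
  obtain ⟨t, ht⟩ := mem_iUnion.1 (hψ ((nint_nonneg _).trans_lt hn).ne')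
  simp only [Finset.coe_biUnion, Finset.coe_range, mem_iUnion, mem_Iio, Finset.mem_coe]
  refine ⟨t, ?_, ht⟩
  by_contra! htT
  have hsub : t - T + T = t := by omega
  exact hfin (t - T) (by omega) ⟨⟨n, by simpa [hsub] using ht, hn⟩, hx01⟩

end Approximation

def IsRatLinComb {ℓ : ℕ} (z : ℝ) (y : Fin ℓ → ℝ) : Prop :=
  ∃ (b : ℚ) (a : Fin ℓ → ℚ), z = (b : ℝ) + ∑ i : Fin ℓ, (a i : ℝ) * y i

lemma IsRatLinComb.neg {ℓ : ℕ} {z : ℝ} {y : Fin ℓ → ℝ} (h : IsRatLinComb z y) :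
    IsRatLinComb (-z) y := by
  obtain ⟨b, a, rfl⟩ := h
  exact ⟨-b, -a, by simp only [Pi.neg_apply, Rat.cast_neg, neg_mul, Finset.sum_neg_distrib]; ring⟩

/-- Conjecture 3.1. -/
def CoveringConjecture : Prop :=
  ∀ (ℓ : ℕ) (y : Fin ℓ → ℝ) (z : ℝ), ¬ IsRatLinComb z y →
    ∀ ε > (0 : ℝ), ∀ δ > (0 : ℝ), ∀ n₀ : ℕ, 0 < n₀ →
      ∃ (M : ℕ) (n : Fin M → ℕ) (w : Fin ℓ → ℝ),
        1 ≤ M ∧ StrictMono n ∧ (∀ m, n₀ < n m) ∧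
        (∀ m : Fin M, ∀ i : Fin ℓ, nint ((n m : ℝ) * y i - w i) ≤ ε / 2) ∧
        ENNReal.ofReal (1 - δ) ≤
          volume ((⋃ m : Fin M, {x : ℝ | ∃ a : ℤ,
            |x - ((a : ℝ) + z) /
                ((∏ m' : Fin M, ((n m' : ℝ) + 1)) / ((n m : ℝ) + 1))| <
              ε / (2 * ∏ m' : Fin M, ((n m' : ℝ) + 1))}) ∩ Set.Ico (0:ℝ) 1)

namespace CoveringSystem

variable {M : ℕ} (n : Fin M → ℕ)

def modulus : ℕ := ∏ m, (n m + 1)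

/-- `k_m = K / (n_m + 1)` for `K = modulus n`. -/
def cofactor (m : Fin M) : ℕ := ∏ m' ∈ Finset.univ.erase m, (n m' + 1)

def moduli : Finset ℕ := Finset.univ.image (cofactor n)

noncomputable def weight (ε : ℝ) (k : ℕ) : ℝ := ε * k / (2 * modulus n)

lemma modulus_pos : 0 < modulus n := Finset.prod_pos fun _ _ => Nat.succ_pos _

lemma cofactor_pos (m : Fin M) : 0 < cofactor n m := Finset.prod_pos fun _ _ => Nat.succ_pos _

lemma cofactor_mul (m : Fin M) : (cofactor n m : ℝ) * (n m + 1) = modulus n := by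
  exact_mod_cast Finset.prod_erase_mul _ _ (Finset.mem_univ m)

lemma lt_cofactor {m m' : Fin M} (h : m' ≠ m) : n m' < cofactor n m :=
  Finset.single_le_prod' (f := fun i => n i + 1) (fun _ _ => le_add_self)
    (Finset.mem_erase.2 ⟨h, Finset.mem_univ _⟩)

lemma weight_cofactor_mul (ε : ℝ) (m : Fin M) :
    weight n ε (cofactor n m) * (n m + 1) = ε / 2 := by
  rw [weight, div_mul_eq_mul_div, mul_assoc, cofactor_mul]
  field_simp [(Nat.cast_pos.2 (modulus_pos n)).ne']

lemma weight_nonneg {ε : ℝ} (hε : 0 ≤ ε) (k : ℕ) : 0 ≤ weight n ε k := by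
  unfold weight; positivity

lemma hitSet_moduli (ε c : ℝ) : hitSet (moduli n) (weight n ε) c =
    ⋃ m, {x | nint (cofactor n m * x + c) < weight n ε (cofactor n m)} := by
  ext x; simp [hitSet, moduli]

/-- The set whose measure Conjecture 3.1 bounds, for the shift `-z`. -/
lemma iUnion_cover_eq_hitSet (ε z : ℝ) :
    (⋃ m : Fin M, {x : ℝ | ∃ a : ℤ,
      |x - ((a : ℝ) + -z) / ((∏ m' : Fin M, ((n m' : ℝ) + 1)) / ((n m : ℝ) + 1))| <
        ε / (2 * ∏ m' : Fin M, ((n m' : ℝ) + 1))}) = hitSet (moduli n) (weight n ε) z := by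
  have hprod : (∏ m' : Fin M, ((n m' : ℝ) + 1)) = modulus n := by push_cast [modulus]; rfl
  rw [hitSet_moduli]
  refine iUnion_congr fun m => ?_
  ext x
  have hk : (∏ m' : Fin M, ((n m' : ℝ) + 1)) / ((n m : ℝ) + 1) = cofactor n m := by
    rw [div_eq_iff (by positivity), cofactor_mul, hprod]
  rw [mem_ofPred_eq, mem_ofPred_eq, hk,
    exists_abs_sub_div_lt_iff (Nat.cast_pos.2 (cofactor_pos n m)), sub_neg_eq_add, hprod,
    mul_div_assoc', mul_comm (cofactor n m : ℝ) ε, weight]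

lemma hitSet_moduli_subset {ε y w : ℝ} (hw : ∀ m, nint (n m * y - w) ≤ ε / 2) :
    hitSet (moduli n) (weight n ε) y ⊆ {x | nint (modulus n * x + (y + w)) < ε} := by
  rw [hitSet_moduli]
  refine iUnion_subset fun m x hx => ?_
  have hsplit : (modulus n : ℝ) * x + (y + w)
      = ((n m + 1 : ℕ) : ℝ) * (cofactor n m * x + y) - (n m * y - w) := by
    rw [← cofactor_mul n m]; push_cast; ring
  rw [mem_ofPred_eq, hsplit]
  calc _ ≤ ((n m + 1 : ℕ) : ℝ) * nint (cofactor n m * x + y) + nint (n m * y - w) :=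
        (nint_sub_le _ _).trans (add_le_add_left (nint_natCast_mul_le _ _) _)
    _ < ((n m + 1 : ℕ) : ℝ) * weight n ε (cofactor n m) + ε / 2 :=
        add_lt_add_of_lt_of_le (mul_lt_mul_of_pos_left hx (by positivity)) (hw m)
    _ = ε := by push_cast; rw [mul_comm, weight_cofactor_mul]; ring

lemma volume_hitSet_moduli_le {ε y w : ℝ} (hw : ∀ m, nint (n m * y - w) ≤ ε / 2) :
    volume (hitSet (moduli n) (weight n ε) y ∩ Ico 0 1) ≤ ENNReal.ofReal (8 * ε) :=
  (measure_mono (inter_subset_inter_left _ (hitSet_moduli_subset n hw))).trans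
    (volume_nint_lt_inter_Ico_le (modulus_pos n) _ _)

/-- A system with a single modulus `k_m = 1` covers only `O(ε / n_m)` of `[0, 1)`. -/
lemma exists_ne_of_cover {ε z : ℝ} (hε : 0 < ε) (hε' : ε ≤ 1 / 4) (hn : ∀ m, 2 ≤ n m)
    (hcover : ENNReal.ofReal (1 - ε) ≤ volume (hitSet (moduli n) (weight n ε) z ∩ Ico 0 1))
    (m : Fin M) : ∃ m', m' ≠ m := by
  by_contra! hM
  have hsingle : hitSet (moduli n) (weight n ε) z =
      {x | nint (cofactor n m * x + z) < weight n ε (cofactor n m)} := by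
    rw [hitSet_moduli]; ext x
    simp only [mem_iUnion]
    exact ⟨fun ⟨m', h⟩ => hM m' ▸ h, fun h => ⟨m, h⟩⟩
  have hsmall := hcover.trans (hsingle ▸ volume_nint_lt_inter_Ico_le (cofactor_pos n m) z _)
  rw [ENNReal.ofReal_le_ofReal_iff (by nlinarith [weight_nonneg n hε.le (cofactor n m)])]
    at hsmall
  have hweight := weight_cofactor_mul n ε m
  have hnm : (2 : ℝ) ≤ n m := by exact_mod_cast hn m
  nlinarith [weight_nonneg n hε.le (cofactor n m)]

end CoveringSystem

open CoveringSystem in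
theorem CoveringConjecture.exists_stage (conj : CoveringConjecture) {ℓ : ℕ} {y : Fin ℓ → ℝ}
    {z : ℝ} (hz : ¬ IsRatLinComb z y) {ε : ℝ} (hε : 0 < ε) (hε' : ε ≤ 1 / 4) (n₀ : ℕ) :
    ∃ (F : Finset ℕ) (φ : ℕ → ℝ), (∀ k ∈ F, n₀ < k) ∧ (∀ k, 0 ≤ φ k) ∧
      ENNReal.ofReal (1 - ε) ≤ volume (hitSet F φ z ∩ Ico 0 1) ∧
      ∀ i, volume (hitSet F φ (y i) ∩ Ico 0 1) ≤ ENNReal.ofReal (8 * ε) := by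
  obtain ⟨M, n, w, -, -, hn₀, hw, hcover⟩ :=
    conj ℓ y (-z) (fun h => hz (by simpa using h.neg)) ε hε ε hε (n₀ + 1) n₀.succ_pos
  rw [iUnion_cover_eq_hitSet] at hcover
  refine ⟨moduli n, weight n ε, ?_, weight_nonneg n hε.le, hcover,
    fun i => volume_hitSet_moduli_le n fun m => hw m i⟩
  simp only [moduli, Finset.mem_image, Finset.mem_univ, true_and]
  rintro _ ⟨m, rfl⟩
  obtain ⟨m', hm'⟩ := exists_ne_of_cover n hε hε' (fun m => by have := hn₀ m; omega) hcover m
  exact (Nat.lt_succ_self n₀).trans ((hn₀ m').trans (lt_cofactor n hm'))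

open Function in
theorem CoveringConjecture.exists_stages (conj : CoveringConjecture) {ℓ : ℕ → ℕ}
    (y : ∀ t, Fin (ℓ t) → ℝ) (z : ℕ → ℝ) (hz : ∀ t, ¬ IsRatLinComb (z t) (y t))
    {ε : ℕ → ℝ} (hε : ∀ t, 0 < ε t) (hε' : ∀ t, ε t ≤ 1 / 4) :
    ∃ (G : ℕ → Finset ℕ) (Φ : ℕ → ℕ → ℝ), Pairwise (Disjoint on fun t => (G t : Set ℕ)) ∧
      (∀ t, ∀ k ∈ G t, t < k) ∧ (∀ t k, 0 ≤ Φ t k) ∧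
      (∀ t, ENNReal.ofReal (1 - ε t) ≤ volume (hitSet (G t) (Φ t) (z t) ∩ Ico 0 1)) ∧
      ∀ t i, volume (hitSet (G t) (Φ t) (y t i) ∩ Ico 0 1) ≤ ENNReal.ofReal (8 * ε t) := by
  choose F φ hF hφ hcover hy using fun t n₀ => conj.exists_stage (hz t) (hε t) (hε' t) n₀
  let N : ℕ → ℕ := fun t => Nat.rec 0 (fun t Nt => max (Nt + 1) ((F t Nt).sup id)) t
  have hN : ∀ t, N (t + 1) = max (N t + 1) ((F t (N t)).sup id) := fun t => rfl
  have hN_ge : ∀ t, t ≤ N t := fun t => by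
    induction t with
    | zero => exact Nat.zero_le _
    | succ t ih => rw [hN]; exact le_max_of_le_left (by omega)
  have hN_mono : Monotone N :=
    monotone_nat_of_le_succ fun t => (Nat.le_succ _).trans (hN t ▸ le_max_left _ _)
  have hIoc : ∀ t, (F t (N t) : Set ℕ) ⊆ Ioc (N t) (N (t + 1)) := fun t k hk =>
    ⟨hF t _ k hk, hN t ▸ le_max_of_le_right (Finset.le_sup (f := id) hk)⟩
  refine ⟨fun t => F t (N t), fun t => φ t (N t),
    fun s t hst => (hN_mono.pairwise_disjoint_on_Ioc_succ hst).mono (hIoc s) (hIoc t),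
    fun t k hk => (hN_ge t).trans_lt (hF t _ k hk), fun t => hφ t _, fun t => hcover t _,
    fun t => hy t _⟩

theorem stmt1
    -- Conjecture 3.1 (dynamically defined covering systems), as a hypothesis:
    (conj : ∀ (ℓ : ℕ) (y : Fin ℓ → ℝ) (z : ℝ),
      (¬ ∃ (b : ℚ) (a : Fin ℓ → ℚ), z = (b : ℝ) + ∑ i : Fin ℓ, (a i : ℝ) * y i) →
      ∀ ε > (0 : ℝ), ∀ δ > (0 : ℝ), ∀ n₀ : ℕ, 0 < n₀ →
        ∃ (M : ℕ) (n : Fin M → ℕ) (w : Fin ℓ → ℝ),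
          1 ≤ M ∧ StrictMono n ∧ (∀ m, n₀ < n m) ∧
          (∀ m : Fin M, ∀ i : Fin ℓ, nint ((n m : ℝ) * y i - w i) ≤ ε / 2) ∧
          ENNReal.ofReal (1 - δ) ≤
            volume ((⋃ m : Fin M, {x : ℝ | ∃ a : ℤ,
              |x - ((a : ℝ) + z) /
                  ((∏ m' : Fin M, ((n m' : ℝ) + 1)) / ((n m : ℝ) + 1))| <
                ε / (2 * ∏ m' : Fin M, ((n m' : ℝ) + 1))}) ∩ Set.Ico (0:ℝ) 1))
    (y z : ℕ → ℝ)
    -- no z i is a rational linear combination of 1 and finitely many of the y i: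
    (hz : ∀ i : ℕ, 1 ≤ i →
      ¬ ∃ (ℓ : ℕ) (b : ℚ) (a : Fin ℓ → ℚ) (idx : Fin ℓ → ℕ),
        (∀ j, 1 ≤ idx j) ∧ z i = (b : ℝ) + ∑ j : Fin ℓ, (a j : ℝ) * y (idx j)) :
    ∃ ψ : ℕ → ℝ,
      (∀ n, 0 ≤ ψ n) ∧
      (∀ i : ℕ, 1 ≤ i →
        volume {x : ℝ |
          {n : ℕ | 1 ≤ n ∧ nint ((n : ℝ) * x + y i) < ψ n}.Infinite} = 0) ∧
      (∀ i : ℕ, 1 ≤ i →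
        volume {x : ℝ |
          ¬ {n : ℕ | 1 ≤ n ∧ nint ((n : ℝ) * x + z i) < ψ n}.Infinite} = 0) := by
  set ε : ℕ → ℝ := fun t => (1 / 2) ^ (t + 2)
  have hε : ∀ s t, s ≤ t + 2 → ε t ≤ (1 / 2) ^ s := fun s t =>
    pow_le_pow_of_le_one (by norm_num) (by norm_num)
  -- every `i ≥ 1` is `(Nat.unpair t).1 + 1` for infinitely many `t`
  obtain ⟨G, Φ, hdisj, hG, hΦ, hZ, hY⟩ := CoveringConjecture.exists_stages conj
    (fun t (j : Fin (t + 1)) => y (j + 1)) (fun t => z ((Nat.unpair t).1 + 1))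
    (fun t ⟨b, a, h⟩ => hz _ (Nat.succ_pos _)
      ⟨t + 1, b, a, fun j => j + 1, fun _ => le_add_self, h⟩)
    (fun t => by positivity) (fun t => (hε 2 t (by omega)).trans_eq (by norm_num))
  obtain ⟨ψ, hψG, hψ⟩ := exists_eqOn_of_pairwise_disjoint hdisj Φ
  refine ⟨ψ, fun n => ?_, fun i hi => ?_, fun i hi => ?_⟩
  · by_cases hn : ψ n = 0
    · exact hn.ge
    · obtain ⟨t, ht⟩ := mem_iUnion.1 (hψ hn)
      exact (hψG t ht).symm ▸ hΦ t n
  · refine volume_approxSet_eq_zero hψ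
      (((summable_nat_add_iff 2).2 summable_geometric_two).mul_left 8) i fun t hit => ?_
    rw [hitSet_congr (hψG t)]
    simpa only [Nat.sub_add_cancel hi] using hY t ⟨i - 1, by omega⟩
  · refine volume_compl_approxSet_eq_zero hG fun N δ hδ => ?_
    obtain ⟨s, hs⟩ := exists_pow_lt_of_lt_one hδ (by norm_num : (1 / 2 : ℝ) < 1)
    set t := Nat.pair (i - 1) (s + N)
    have hti : (Nat.unpair t).1 + 1 = i := by simp only [t, Nat.unpair_pair]; omega
    have hst : s + N ≤ t := Nat.right_le_pair _ _
    refine ⟨t, by omega, ?_⟩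
    rw [hitSet_congr (hψG t), ← hti]
    exact (ENNReal.ofReal_le_ofReal (by linarith [hε s t (by omega)])).trans (hZ t)
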